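/- arXiv:2101.09751 — 2 statements merged into one kernel-verified Lean document; each statement's English description precedes it below -/
import Mathlib

section
/- If X is a binomial random variable with parameters n and p, λ = np, and ρ(x) = (1+x)log(1+x) - x for x ≥ -1 (with ρ(x) = ∞ for x < -1), then for all t ≥ 0, P(X ≤ E[X] - t) ≤ exp(-λ ρ(-t/λ)) ≤ exp(-t²/(2λ)). -/
/-!
Exponential moment method with the probability generating function `E[u^X] = (1 - p + p u)^n`:
for `0 ≤ u ≤ 1` Markov's inequality gives `u^c P(X ≤ c) ≤ (1 - p + p u)^n ≤ exp(λ(u - 1))`, and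
the choice `u = 1 + x`, `c = λ(1 + x)` with `x = -t/λ` yields `exp(-λ ρ(x))`. Using the real power
`u^c` rather than `exp(-s c)` lets the endpoint `u = 0` (that is, `t = λ`) go through, as `0^0 = 1`.
For `x ∈ [-1, 0]` the bound `ρ(x) ≥ x²/2` follows from `sinh y ≤ y` for `y = log(1 + x) ≤ 0`.
-/

open scoped Classical

/-- Weight of an outcome `ω` of `n` independent Bernoulli(p) trials. -/
noncomputable def binWeight (n : ℕ) (p : ℝ) (ω : Fin n → Bool) : ℝ :=
  ∏ i, if ω i then p else 1 - p

/-- Probability of an event in the binomial model `B(n,p)`. -/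
noncomputable def binProb (n : ℕ) (p : ℝ) (E : (Fin n → Bool) → Prop) : ℝ :=
  ∑ ω : Fin n → Bool, if E ω then binWeight n p ω else 0

/-- The number of successes in the outcome `ω`. -/
def binCount {n : ℕ} (ω : Fin n → Bool) : ℕ :=
  (Finset.univ.filter fun i => ω i = true).card

/-- `ρ(x) = (1+x)log(1+x) - x` for `x ≥ -1`. -/
noncomputable def rho (x : ℝ) : ℝ := (1 + x) * Real.log (1 + x) - x

open Finset Real

lemma binWeight_nonneg {n : ℕ} {p : ℝ} (hp0 : 0 ≤ p) (hp1 : p ≤ 1) (ω : Fin n → Bool) :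
    0 ≤ binWeight n p ω :=
  prod_nonneg fun i _ => by split <;> linarith

lemma binProb_eq_zero_of_forall_not {n : ℕ} {p : ℝ} {E : (Fin n → Bool) → Prop}
    (hE : ∀ ω, ¬ E ω) : binProb n p E = 0 :=
  sum_eq_zero fun ω _ => if_neg (hE ω)

lemma sum_binWeight_mul_pow_binCount (n : ℕ) (p u : ℝ) :
    ∑ ω, binWeight n p ω * u ^ binCount ω = (1 - p + p * u) ^ n := by
  have hterm (ω : Fin n → Bool) :
      binWeight n p ω * u ^ binCount ω = ∏ i, if ω i then p * u else 1 - p := by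
    rw [binWeight, binCount, ← prod_const, prod_filter, ← prod_mul_distrib]
    exact prod_congr rfl fun i _ => by cases ω i <;> simp
  rw [sum_congr rfl fun ω _ => hterm ω,
    ← Fintype.sum_pow (fun b : Bool => if b then p * u else 1 - p), Fintype.sum_bool]
  simp only [if_true, Bool.false_eq_true, if_false, add_comm]

lemma rpow_mul_binProb_le {n : ℕ} {p u : ℝ} (c : ℝ) (hp0 : 0 ≤ p) (hp1 : p ≤ 1) (hu0 : 0 ≤ u)
    (hu1 : u ≤ 1) :
    u ^ c * binProb n p (fun ω => (binCount ω : ℝ) ≤ c) ≤ (1 - p + p * u) ^ n := by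
  rw [← sum_binWeight_mul_pow_binCount, binProb, mul_sum]
  refine sum_le_sum fun ω _ => ?_
  have hw := binWeight_nonneg hp0 hp1 ω
  split_ifs with hc
  · rw [mul_comm, ← rpow_natCast]
    exact mul_le_mul_of_nonneg_left
      (rpow_le_rpow_of_exponent_ge' hu0 hu1 (Nat.cast_nonneg _) hc) hw
  · simpa using mul_nonneg hw (pow_nonneg hu0 (binCount ω))

lemma rpow_mul_self_eq_exp {u : ℝ} (a : ℝ) (hu : 0 ≤ u) :
    u ^ (a * u) = exp (a * (u * log u)) := by
  rcases hu.eq_or_lt with rfl | hu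
  · simp
  · rw [rpow_def_of_pos hu]
    ring_nf

lemma one_sub_mul_add_pow_le_exp {n : ℕ} {p u : ℝ} (hp0 : 0 ≤ p) (hp1 : p ≤ 1) (hu0 : 0 ≤ u) :
    (1 - p + p * u) ^ n ≤ exp (n * p * (u - 1)) := by
  calc (1 - p + p * u) ^ n ≤ exp (p * (u - 1)) ^ n :=
        pow_le_pow_left₀ (by nlinarith) (by linarith [add_one_le_exp (p * (u - 1))]) n
    _ = exp (n * p * (u - 1)) := by rw [← exp_nat_mul, mul_assoc]

lemma binProb_le_exp_neg_mul_rho {n : ℕ} {p x : ℝ} (hp0 : 0 ≤ p) (hp1 : p ≤ 1) (hx1 : -1 ≤ x)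
    (hx0 : x ≤ 0) :
    binProb n p (fun ω => (binCount ω : ℝ) ≤ n * p * (1 + x)) ≤ exp (-(n * p * rho x)) := by
  have hu0 : 0 ≤ 1 + x := by linarith
  have hmarkov := (rpow_mul_binProb_le (n := n) (n * p * (1 + x)) hp0 hp1 hu0 (by linarith)).trans
    (one_sub_mul_add_pow_le_exp hp0 hp1 hu0)
  rw [rpow_mul_self_eq_exp _ hu0] at hmarkov
  calc _ ≤ exp (n * p * (1 + x - 1)) / exp (n * p * ((1 + x) * log (1 + x))) :=
        (le_div_iff₀' (exp_pos _)).2 hmarkov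
    _ = exp (-(n * p * rho x)) := by
        rw [← exp_sub, rho]
        ring_nf

lemma sq_div_two_le_rho {x : ℝ} (hx1 : -1 ≤ x) (hx0 : x ≤ 0) : x ^ 2 / 2 ≤ rho x := by
  rcases hx1.eq_or_lt with rfl | hx1
  · norm_num [rho]
  have hu : 0 < 1 + x := by linarith
  have hsinh : (1 + x - (1 + x)⁻¹) / 2 ≤ log (1 + x) := by
    rw [← sinh_log hu]
    exact sinh_le_self_iff.2 (log_nonpos hu.le (by linarith))
  have hmul := mul_le_mul_of_nonneg_left hsinh hu.le
  rw [mul_div_assoc', mul_sub, mul_inv_cancel₀ hu.ne'] at hmul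
  rw [rho]
  nlinarith

/-- Chernoff's inequality, lower tail: if `X ∈ B(n,p)`, `λ = np`, then for `t ≥ 0`,
`P(X ≤ E[X] - t) ≤ exp(-λ ρ(-t/λ)) ≤ exp(-t²/(2λ))`, where `ρ(x) = ∞` for `x < -1`
(so the middle quantity is `0` in that case, `exp(-∞) = 0`). -/
theorem chernoff_lower (n : ℕ) (p t lam : ℝ) (hn : 0 < n) (hp0 : 0 < p) (hp1 : p ≤ 1)
    (ht : 0 ≤ t) (hlam : lam = n * p) :
    binProb n p (fun ω => (binCount ω : ℝ) ≤ (n : ℝ) * p - t) ≤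
        (if (-1 : ℝ) ≤ -t / lam then Real.exp (-(lam * rho (-t / lam))) else 0) ∧
      (if (-1 : ℝ) ≤ -t / lam then Real.exp (-(lam * rho (-t / lam))) else 0) ≤
        Real.exp (-(t ^ 2 / (2 * lam))) := by
  subst hlam
  have hlam : 0 < (n : ℝ) * p := mul_pos (Nat.cast_pos.2 hn) hp0
  have hx0 : -t / (n * p) ≤ 0 := div_nonpos_of_nonpos_of_nonneg (by linarith) hlam.le
  split_ifs with hx1
  · refine ⟨?_, exp_le_exp.2 (neg_le_neg ?_)⟩
    · have hc : (n : ℝ) * p - t = n * p * (1 + -t / (n * p)) := by field_simp; ring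
      rw [hc]
      exact binProb_le_exp_neg_mul_rho hp0.le hp1 hx1 hx0
    · calc t ^ 2 / (2 * (n * p)) = n * p * ((-t / (n * p)) ^ 2 / 2) := by field_simp
        _ ≤ n * p * rho (-t / (n * p)) :=
          mul_le_mul_of_nonneg_left (sq_div_two_le_rho hx1 hx0) hlam.le
  · have htl : n * p < t := by
      rwa [neg_div, neg_le_neg_iff, div_le_one hlam, not_le] at hx1
    refine ⟨(binProb_eq_zero_of_forall_not fun ω hω => ?_).le, (exp_pos _).le⟩
    linarith [(Nat.cast_nonneg (binCount ω) : (0 : ℝ) ≤ _)]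
end

section
/- If p = p(n) ≥ n^{-1/9}·(log n)², then a.a.s. every set of n^{1/9} vertices of D ∈ D(n,p) induces a subdigraph containing a directed cycle; consequently a.a.s. the largest acyclic induced subdigraph of D has fewer than n^{1/9} vertices. -/
open scoped Classical

/-- Weight of a digraph `D` on `[n]` in the model `D(n,p)`: each ordered pair of
distinct vertices is an arc independently with probability `p`; loops are forbidden
(outcomes with a loop get weight `0`). -/
noncomputable def arcWeight (n : ℕ) (p : ℝ) (D : Fin n → Fin n → Bool) : ℝ :=
  ∏ u, ∏ v, if u = v then (if D u v then 0 else 1) else (if D u v then p else 1 - p)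

/-- Probability of an event in the random digraph model `D(n,p)`. -/
noncomputable def digraphProb (n : ℕ) (p : ℝ) (E : (Fin n → Fin n → Bool) → Prop) : ℝ :=
  ∑ D : Fin n → Fin n → Bool, if E D then arcWeight n p D else 0

/-- Expectation of a random variable in the random digraph model `D(n,p)`. -/
noncomputable def digraphExp (n : ℕ) (p : ℝ) (X : (Fin n → Fin n → Bool) → ℝ) : ℝ :=
  ∑ D : Fin n → Fin n → Bool, arcWeight n p D * X D

/-- The set of neighbours of `v`: vertices `u ≠ v` joined to `v` by an arc in at
least one direction. -/
def nbhd {n : ℕ} (D : Fin n → Fin n → Bool) (v : Fin n) : Finset (Fin n) :=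
  Finset.univ.filter fun u => u ≠ v ∧ (D u v = true ∨ D v u = true)

/-- The subdigraph of `D` induced by `S` contains a directed cycle. -/
def hasCycleIn {n : ℕ} (D : Fin n → Fin n → Bool) (S : Finset (Fin n)) : Prop :=
  ∃ m : ℕ, ∃ φ : Fin (m + 2) → Fin n, Function.Injective φ ∧
    (∀ i, φ i ∈ S) ∧ ∀ i, D (φ i) (φ (i + 1)) = true

/-!
An acyclic set of `k` vertices can be listed as `σ 0, …, σ (k-1)` with no arc going forward:
put first a vertex with no out-arc inside the set and recurse. Such a vertex exists because
otherwise following out-arcs inside the set is a self-map of a finite set without fixed points,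
and a periodic orbit of it is a directed cycle. For a fixed injective list the `k.choose 2`
forward arcs are all absent with probability `(1 - p) ^ k.choose 2`, so a union bound over the
at most `n ^ k` lists bounds the probability that some `k`-set is acyclic by
`n ^ k (1 - p) ^ k.choose 2 ≤ exp (k log n - p k (k - 1) / 2)`. For `k = ⌈n ^ (1/9)⌉` the
hypothesis gives `k p ≥ (log n) ^ 2`, and then this is at most `1 / n`. Finally, if every
`k`-set contains a cycle, every set without a cycle has fewer than `k` vertices.
-/

open Filter Function Finset Real

theorem Fintype.sum_prod_prod_eq_prod_prod_sum {α β R : Type*} [Fintype α] [DecidableEq α]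
    [Fintype β] [CommSemiring R] (f : α → α → β → R) :
    ∑ D : α → α → β, ∏ u, ∏ v, f u v (D u v) = ∏ u, ∏ v, ∑ b, f u v b := by
  simp only [Fintype.prod_sum]

theorem Function.exists_mem_periodicPts {α : Type*} [Finite α] [Nonempty α] (f : α → α) :
    ∃ x, x ∈ periodicPts f := by
  obtain ⟨x₀⟩ := ‹Nonempty α›
  obtain ⟨i, j, hij, h⟩ := Finite.exists_ne_map_eq_of_infinite fun t : ℕ => f^[t] x₀
  wlog hlt : i < j generalizing i j
  · exact this j i hij.symm h.symm (by omega)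
  refine ⟨f^[i] x₀, j - i, by omega, ?_⟩
  rw [IsPeriodicPt, IsFixedPt, ← iterate_add_apply, Nat.sub_add_cancel hlt.le]
  exact h.symm

section Probability

variable {n : ℕ} {p : ℝ}

theorem arcWeight_nonneg (hp0 : 0 ≤ p) (hp1 : p ≤ 1) (D : Fin n → Fin n → Bool) :
    0 ≤ arcWeight n p D :=
  prod_nonneg fun _ _ => prod_nonneg fun _ _ => by split_ifs <;> linarith

theorem digraphProb_forall_mem_eq_false (A : Finset (Fin n × Fin n))
    (hA : ∀ a ∈ A, a.1 ≠ a.2) :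
    digraphProb n p (fun D => ∀ a ∈ A, D a.1 a.2 = false) = (1 - p) ^ A.card := by
  -- the one-arc weight with the arcs of `A` forced absent, so that the summand factors
  set g : Fin n → Fin n → Bool → ℝ := fun u v b =>
    if (u, v) ∈ A ∧ b then 0 else if u = v then (if b then 0 else 1) else (if b then p else 1 - p)
  have hsum : ∀ u v, ∑ b, g u v b = if (u, v) ∈ A then 1 - p else 1 := by
    intro u v
    by_cases huv : (u, v) ∈ A
    · simp [g, huv, hA _ huv]
    · by_cases h : u = v
      · subst h
        simp [g, huv]
      · simp [g, huv, h]
  have hterm : digraphProb n p (fun D => ∀ a ∈ A, D a.1 a.2 = false)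
      = ∑ D : Fin n → Fin n → Bool, ∏ u, ∏ v, g u v (D u v) := by
    refine sum_congr rfl fun D _ => ?_
    split_ifs with hD
    · refine prod_congr rfl fun u _ => prod_congr rfl fun v _ => ?_
      have : ¬((u, v) ∈ A ∧ D u v = true) := fun h => by simpa [h.2] using hD _ h.1
      simp only [g, if_neg this]
    · push Not at hD
      obtain ⟨a, ha, hDa⟩ := hD
      refine (prod_eq_zero (mem_univ a.1) (prod_eq_zero (mem_univ a.2) ?_)).symm
      simp [g, ha, hDa]
  rw [hterm, Fintype.sum_prod_prod_eq_prod_prod_sum]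
  simp only [hsum]
  rw [← Fintype.prod_prod_type' fun u v => if (u, v) ∈ A then 1 - p else 1,
    Fintype.prod_ite_mem, prod_const]

theorem digraphProb_true : digraphProb n p (fun _ => True) = 1 := by
  simpa using digraphProb_forall_mem_eq_false (n := n) (p := p) ∅ (by simp)

theorem digraphProb_compl (E : (Fin n → Fin n → Bool) → Prop) :
    digraphProb n p (fun D => ¬ E D) = 1 - digraphProb n p E := by
  rw [eq_sub_iff_add_eq, ← digraphProb_true (n := n) (p := p), digraphProb, digraphProb,
    digraphProb, ← sum_add_distrib]
  refine sum_congr rfl fun D _ => ?_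
  by_cases h : E D <;> simp [h]

theorem digraphProb_mono (hp0 : 0 ≤ p) (hp1 : p ≤ 1) {E E' : (Fin n → Fin n → Bool) → Prop}
    (h : ∀ D, E D → E' D) : digraphProb n p E ≤ digraphProb n p E' := by
  refine sum_le_sum fun D _ => ?_
  by_cases hE : E D
  · simp [hE, h D hE]
  · simpa [hE] using ite_nonneg (arcWeight_nonneg hp0 hp1 D) le_rfl

theorem digraphProb_le_one (hp0 : 0 ≤ p) (hp1 : p ≤ 1) (E : (Fin n → Fin n → Bool) → Prop) :
    digraphProb n p E ≤ 1 :=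
  digraphProb_true (n := n) (p := p) ▸ digraphProb_mono hp0 hp1 fun _ _ => trivial

theorem digraphProb_exists_le_sum (hp0 : 0 ≤ p) (hp1 : p ≤ 1) {ι : Type*} (s : Finset ι)
    (E : ι → (Fin n → Fin n → Bool) → Prop) :
    digraphProb n p (fun D => ∃ i ∈ s, E i D) ≤ ∑ i ∈ s, digraphProb n p (E i) := by
  have hnonneg : ∀ i D, 0 ≤ if E i D then arcWeight n p D else 0 :=
    fun _ D => ite_nonneg (arcWeight_nonneg hp0 hp1 D) le_rfl
  unfold digraphProb
  rw [sum_comm]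
  refine sum_le_sum fun D _ => ?_
  split_ifs with h
  · obtain ⟨i, hi, hE⟩ := h
    calc arcWeight n p D = if E i D then arcWeight n p D else 0 := (if_pos hE).symm
      _ ≤ _ := single_le_sum (fun j _ => hnonneg j D) hi
  · exact sum_nonneg fun i _ => hnonneg i D

end Probability

section Cycles

variable {n : ℕ} {D : Fin n → Fin n → Bool} {S : Finset (Fin n)}

theorem hasCycleIn_mono {T : Finset (Fin n)} (hST : S ⊆ T) (h : hasCycleIn D S) :
    hasCycleIn D T :=
  let ⟨m, φ, hφ, hφS, hφD⟩ := h
  ⟨m, φ, hφ, fun i => hST (hφS i), hφD⟩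

theorem hasCycleIn_of_forall_exists_arc (hS : S.Nonempty)
    (h : ∀ v ∈ S, ∃ u ∈ S, u ≠ v ∧ D v u = true) : hasCycleIn D S := by
  have := hS.to_subtype
  choose f hf using fun v : S => h v v.2
  let F : S → S := fun v => ⟨f v, (hf v).1⟩
  obtain ⟨x, hx⟩ := exists_mem_periodicPts F
  obtain ⟨m, hm⟩ : ∃ m, minimalPeriod F x = m + 2 := by
    have hpos := minimalPeriod_pos_of_mem_periodicPts hx
    have hne : minimalPeriod F x ≠ 1 := fun h1 =>
      (hf x).2.1 (congrArg Subtype.val (minimalPeriod_eq_one_iff_isFixedPt.1 h1))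
    exact ⟨minimalPeriod F x - 2, by omega⟩
  refine ⟨m, fun t => F^[t] x, fun s t hst => ?_, fun t => (F^[t] x).2, fun t => ?_⟩
  · exact Fin.ext (iterate_injOn_Iio_minimalPeriod (by simp [hm]) (by simp [hm])
      (Subtype.val_injective hst))
  · have hsucc : F^[(t + 1 : Fin (m + 2))] x = F (F^[t] x) := by
      have hmod := iterate_mod_minimalPeriod_eq (f := F) (x := x) (n := t + 1)
      rw [hm] at hmod
      rw [Fin.val_add, Fin.val_one', Nat.add_mod_mod, hmod, iterate_succ_apply']
    simpa only [hsucc] using (hf (F^[t] x)).2.2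

theorem exists_sink_of_not_hasCycleIn (h : ¬ hasCycleIn D S) (hS : S.Nonempty) :
    ∃ v ∈ S, ∀ u ∈ S, u ≠ v → D v u = false := by
  by_contra! hcon
  exact h (hasCycleIn_of_forall_exists_arc hS fun v hv => by simpa using hcon v hv)

theorem exists_embedding_of_not_hasCycleIn {k : ℕ} (hk : S.card = k) (h : ¬ hasCycleIn D S) :
    ∃ σ : Fin k ↪ Fin n, (∀ i, σ i ∈ S) ∧ ∀ i j, i < j → D (σ i) (σ j) = false := by
  induction k generalizing S with
  | zero => exact ⟨Embedding.ofIsEmpty, fun i => i.elim0, fun i => i.elim0⟩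
  | succ k ih =>
    obtain ⟨v, hvS, hsink⟩ := exists_sink_of_not_hasCycleIn h (card_pos.1 (by omega))
    obtain ⟨σ, hσS, hσ⟩ := ih (S := S.erase v) (by simp [hvS, hk])
      fun h' => h (hasCycleIn_mono (erase_subset _ _) h')
    have hv : v ∉ Set.range σ := by
      rintro ⟨i, rfl⟩
      exact ne_of_mem_erase (hσS i) rfl
    refine ⟨Fin.Embedding.cons σ hv, fun i => ?_, fun i j hij => ?_⟩
    · cases i using Fin.cases <;> simp [hvS, mem_of_mem_erase (hσS _)]
    · cases j using Fin.cases with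
      | zero => exact absurd hij (Fin.not_lt_zero _)
      | succ j =>
        cases i using Fin.cases with
        | zero => simpa using hsink _ (mem_of_mem_erase (hσS j)) (ne_of_mem_erase (hσS j))
        | succ i => simpa using hσ i j (Fin.succ_lt_succ_iff.1 hij)

theorem card_lt_of_forall_card_eq_hasCycleIn {k : ℕ}
    (h : ∀ T : Finset (Fin n), T.card = k → hasCycleIn D T) (hS : ¬ hasCycleIn D S) :
    S.card < k := by
  by_contra! hk
  obtain ⟨T, hTS, hT⟩ := exists_subset_card_eq hk
  exact hS (hasCycleIn_mono hTS (h T hT))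

end Cycles

section Acyclic

variable {n k : ℕ} {p : ℝ}

theorem digraphProb_no_forward_arc (σ : Fin k ↪ Fin n) :
    digraphProb n p (fun D => ∀ i j, i < j → D (σ i) (σ j) = false) = (1 - p) ^ k.choose 2 := by
  let A := {q : Fin k × Fin k | q.1 < q.2}.toFinset.image (Prod.map σ σ)
  have hA : A.card = k.choose 2 := by
    rw [card_image_of_injective _ (σ.injective.prodMap σ.injective)]
    simpa using Fintype.card_product_filter_lt (α := Fin k)
  have hoff : ∀ a ∈ A, a.1 ≠ a.2 := by
    simp only [A, mem_image, Set.mem_toFinset, Set.mem_ofPred_eq]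
    rintro _ ⟨q, hq, rfl⟩ h
    exact hq.ne (σ.injective h)
  rw [← hA, ← digraphProb_forall_mem_eq_false A hoff]
  congr 1
  ext D
  simp only [A, mem_image, Set.mem_toFinset, Set.mem_ofPred_eq, Prod.exists, Prod.map_apply]
  constructor
  · rintro h _ ⟨i, j, hij, rfl⟩
    exact h i j hij
  · intro h i j hij
    exact h _ ⟨i, j, hij, rfl⟩

theorem digraphProb_exists_acyclic_le (hp0 : 0 ≤ p) (hp1 : p ≤ 1) :
    digraphProb n p (fun D => ∃ S : Finset (Fin n), S.card = k ∧ ¬ hasCycleIn D S)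
      ≤ n ^ k * (1 - p) ^ k.choose 2 :=
  calc _ ≤ digraphProb n p (fun D => ∃ σ ∈ (univ : Finset (Fin k ↪ Fin n)),
          ∀ i j, i < j → D (σ i) (σ j) = false) :=
        digraphProb_mono hp0 hp1 fun D ⟨_, hS, hc⟩ =>
          let ⟨σ, _, hσ⟩ := exists_embedding_of_not_hasCycleIn hS hc
          ⟨σ, mem_univ σ, hσ⟩
    _ ≤ ∑ σ : Fin k ↪ Fin n, digraphProb n p (fun D => ∀ i j, i < j → D (σ i) (σ j) = false) :=
        digraphProb_exists_le_sum hp0 hp1 _ _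
    _ = n.descFactorial k * (1 - p) ^ k.choose 2 := by
        simp [digraphProb_no_forward_arc, Fintype.card_embedding_eq]
    _ ≤ n ^ k * (1 - p) ^ k.choose 2 := by
        gcongr
        exact_mod_cast Nat.descFactorial_le_pow n k

end Acyclic

theorem pow_mul_one_sub_pow_choose_two_le_inv {x p : ℝ} {k : ℕ} (hx : 0 < x) (hp1 : p ≤ 1)
    (hk : 3 ≤ k) (hlog : 4 ≤ log x) (hkp : log x ^ 2 ≤ k * p) :
    x ^ k * (1 - p) ^ k.choose 2 ≤ x⁻¹ := by
  have hk' : (3 : ℝ) ≤ k := by exact_mod_cast hk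
  have hexp : (k + 1) * log x ≤ p * k.choose 2 := by
    rw [Nat.cast_choose_two]
    nlinarith [mul_le_mul_of_nonneg_right hkp (by linarith : (0 : ℝ) ≤ k - 1),
      mul_nonneg (by linarith : (0 : ℝ) ≤ log x - 4) (by nlinarith : (0 : ℝ) ≤ log x * (k - 1)),
      mul_nonneg (by linarith : (0 : ℝ) ≤ log x) (by linarith : (0 : ℝ) ≤ k - 3)]
  calc x ^ k * (1 - p) ^ k.choose 2 ≤ exp (log x) ^ k * exp (-p) ^ k.choose 2 := by
        rw [exp_log hx]
        gcongr
        exact one_sub_le_exp_neg p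
    _ = exp (k * log x - p * k.choose 2) := by
        rw [← exp_nat_mul, ← exp_nat_mul, ← exp_add]
        ring_nf
    _ ≤ exp (-log x) := exp_le_exp.2 (by linarith)
    _ = x⁻¹ := by rw [exp_neg, exp_log hx]

theorem sq_log_le_natCeil_rpow_mul {x a q : ℝ} (hx : 0 < x) (hq : x ^ (-a) * log x ^ 2 ≤ q) :
    log x ^ 2 ≤ ⌈x ^ a⌉₊ * q := by
  have hq0 : 0 ≤ q := le_trans (by positivity) hq
  calc log x ^ 2 = x ^ a * (x ^ (-a) * log x ^ 2) := by
        rw [rpow_neg hx.le, ← mul_assoc, mul_inv_cancel₀ (rpow_pos_of_pos hx a).ne', one_mul]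
    _ ≤ ⌈x ^ a⌉₊ * q := mul_le_mul (Nat.le_ceil _) hq (by positivity) (by positivity)

theorem eventually_three_le_rpow_and_four_le_log :
    ∀ᶠ n : ℕ in atTop, 3 ≤ (n : ℝ) ^ ((1 : ℝ) / 9) ∧ 4 ≤ log n := by
  have h := tendsto_natCast_atTop_atTop (R := ℝ)
  exact (((tendsto_rpow_atTop (by norm_num)).comp h).eventually_ge_atTop 3).and
    ((tendsto_log_atTop.comp h).eventually_ge_atTop 4)

/-- If `p(n) ≥ n^{-1/9}(log n)²`, then a.a.s. every set of `n^{1/9}` vertices of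
`D ∈ D(n,p)` induces a subdigraph containing a directed cycle; consequently a.a.s.
every acyclic induced subdigraph of `D` has fewer than `n^{1/9}` vertices. -/
theorem aas_no_large_acyclic_set (p : ℕ → ℝ) (hp1 : ∀ n : ℕ, p n ≤ 1)
    (hp : ∀ n : ℕ, ((n : ℝ) ^ (-(1 : ℝ) / 9) * (Real.log n) ^ 2 : ℝ) ≤ p n) :
    Tendsto (fun n => digraphProb n (p n) (fun D =>
        (∀ S : Finset (Fin n), S.card = ⌈(n : ℝ) ^ ((1 : ℝ) / 9)⌉₊ → hasCycleIn D S) ∧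
        (∀ S : Finset (Fin n), ¬ hasCycleIn D S → (S.card : ℝ) < (n : ℝ) ^ ((1 : ℝ) / 9))))
      atTop (nhds 1) := by
  have hp0 : ∀ n, 0 ≤ p n := fun n => le_trans (by positivity) (hp n)
  have hlim : Tendsto (fun n : ℕ => 1 - (n : ℝ)⁻¹) atTop (nhds 1) := by
    simpa using tendsto_const_nhds.sub (tendsto_inv_atTop_nhds_zero_nat (𝕜 := ℝ))
  refine tendsto_of_tendsto_of_tendsto_of_le_of_le' hlim tendsto_const_nhds ?_
    (Eventually.of_forall fun n => digraphProb_le_one (hp0 n) (hp1 n) _)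
  filter_upwards [eventually_gt_atTop 0, eventually_three_le_rpow_and_four_le_log]
    with n hn ⟨h3, hlog⟩
  have hn : (0 : ℝ) < n := by exact_mod_cast hn
  set k := ⌈(n : ℝ) ^ ((1 : ℝ) / 9)⌉₊
  have hk : 3 ≤ k := by exact_mod_cast h3.trans (Nat.le_ceil _)
  have hkp : log n ^ 2 ≤ k * p n :=
    sq_log_le_natCeil_rpow_mul hn (by simpa only [neg_div] using hp n)
  calc 1 - (n : ℝ)⁻¹ ≤ 1 - n ^ k * (1 - p n) ^ k.choose 2 := by
        gcongr
        exact pow_mul_one_sub_pow_choose_two_le_inv hn (hp1 n) hk hlog hkp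
    _ ≤ 1 - digraphProb n (p n) (fun D => ∃ S : Finset (Fin n), S.card = k ∧ ¬ hasCycleIn D S) := by
        gcongr
        exact digraphProb_exists_acyclic_le (hp0 n) (hp1 n)
    _ = digraphProb n (p n) (fun D => ¬ ∃ S : Finset (Fin n), S.card = k ∧ ¬ hasCycleIn D S) :=
        (digraphProb_compl _).symm
    _ ≤ _ := digraphProb_mono (hp0 n) (hp1 n) fun D hD => by
        push Not at hD
        exact ⟨hD, fun S hS => Nat.lt_ceil.1 (card_lt_of_forall_card_eq_hasCycleIn hD hS)⟩
end
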